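/- arXiv:2010.10464 — 2 statements merged into one kernel-verified Lean document; each statement's English description precedes it below -/
import Mathlib

section
/- For the Shangguan et al. Construction-I placement with parameters n, a, b (positive integers, a + b ≤ n), assume ε ≥ 1 and Z = C(n,a) − C(n−b,a) ≥ 2ε + 1, and let a₀ be the smallest integer with C(a₀, a−1) ≥ 2ε. If a₀ ≤ n − b, then ℓ*(X,ε) ≥ 2ε(n − b − a₀ + 1) + C(a₀, a). -/
open Matrix Finset

/-- `H` is a valid encoder for the `(X, ε)` cache update problem: for every node `k`
there is a decoder `D_k` recovering `(w+e)|_{X_k}` from the codeword `H(w+e)` and the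
side information `w|_{X_k}`, for all `w` and all updates `e` of Hamming weight at most `ε`. -/
def ValidEncoder {𝓕 𝓚 : Type} [Fintype 𝓕] (F : Type) [Field F] [Fintype F]
    (X : 𝓚 → Finset 𝓕) (ε : ℕ) {l : ℕ} (H : Matrix (Fin l) 𝓕 F) : Prop :=
  ∀ k : 𝓚, ∃ D : (Fin l → F) → ({f // f ∈ X k} → F) → ({f // f ∈ X k} → F),
    ∀ w e : 𝓕 → F, {f | e f ≠ 0}.ncard ≤ ε →
      D (H.mulVec (w + e)) (fun f => w f.1) = fun f => (w + e) f.1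

/-- The optimal codelength `ℓ*(X, ε)`: the least `l` for which some finite field `F`
admits a valid encoder `H ∈ F^{l×F}` for the `(X, ε)` cache update problem. -/
noncomputable def optLen {𝓕 𝓚 : Type} [Fintype 𝓕] (X : 𝓚 → Finset 𝓕) (ε : ℕ) : ℕ :=
  sInf {l : ℕ | ∃ (F : Type) (inst1 : Field F) (inst2 : Fintype F)
    (H : Matrix (Fin l) 𝓕 F), @ValidEncoder 𝓕 𝓚 _ F inst1 inst2 X ε l H}

/-!
If `H` is a valid encoder and `H d = 0` where `d` has at most `2ε` nonzero entries on `X k`,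
then `d` vanishes on `X k`: those entries split into two updates of weight `≤ ε` that node `k`
cannot tell apart. Hence, if the columns of `H` indexed by `s` are independent and `s` avoids
`X k`, any `2ε` columns indexed inside `X k` can be added to `s` keeping independence.

Fix `B` with `#B = b - 1` and let `A` be disjoint from `B`. For `x ∈ A`, the node `{x} ∪ B`
caches exactly those `a`-subsets of `A` that contain `x`. If `#A = a₀`, there are
`C(a₀ - 1, a - 1) < 2ε` of them, so all `C(a₀, a)` columns indexed by `a`-subsets of `A` are
independent. Enlarging `A` by one element `x` creates `C(#A, a - 1) ≥ 2ε` new `a`-subsets, all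
containing `x`, and `2ε` of them can be added. Ending with `A = Bᶜ` of size `n - b + 1` gives
`C(a₀, a) + 2ε (n - b - a₀ + 1)` independent columns.
-/

theorem Matrix.card_le_of_linearIndepOn_col {𝓕 F : Type*} [Field F] {l : ℕ}
    {H : Matrix (Fin l) 𝓕 F} {s : Finset 𝓕} (hs : LinearIndepOn F H.col ↑s) : #s ≤ l := by
  simpa using hs.fintype_card_le_finrank

section

variable {m 𝓕 F : Type*} [Fintype 𝓕] [Field F]

theorem Matrix.linearCombination_col (H : Matrix m 𝓕 F) (d : 𝓕 →₀ F) :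
    Finsupp.linearCombination F H.col d = H *ᵥ ⇑d := by
  rw [Finsupp.linearCombination_apply, Finsupp.sum_fintype _ _ (by simp)]
  ext i
  simp [mulVec, dotProduct, mul_comm]

theorem Matrix.linearIndepOn_col_iff {H : Matrix m 𝓕 F} {s : Set 𝓕} :
    LinearIndepOn F H.col s ↔ ∀ d : 𝓕 → F, (∀ f ∉ s, d f = 0) → H *ᵥ d = 0 → d = 0 := by
  rw [linearIndepOn_iff]
  constructor
  · intro h d hds hd
    have hsupp : Finsupp.equivFunOnFinite.symm d ∈ Finsupp.supported F F s := fun f hf => by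
      by_contra hfs
      simp [hds f hfs] at hf
    simpa using congrArg (⇑) (h _ hsupp (by simpa [linearCombination_col]))
  · intro h d hds hd
    refine DFunLike.coe_injective (h d (fun f hf => ?_) (by rwa [← linearCombination_col]))
    exact Finsupp.notMem_support_iff.mp fun hf' => hf (hds hf')

end

open Function

theorem Function.exists_add_eq_of_ncard_support_le {ι M : Type*} [Finite ι] [AddMonoid M]
    {g : ι → M} {p q : ℕ} (h : (support g).ncard ≤ p + q) :
    ∃ e₁ e₂ : ι → M, e₁ + e₂ = g ∧ (support e₁).ncard ≤ p ∧ (support e₂).ncard ≤ q := by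
  obtain ⟨S, hS, hScard⟩ := Set.exists_subset_card_eq (min_le_right p (support g).ncard)
  refine ⟨S.indicator g, Sᶜ.indicator g, Set.indicator_self_add_compl S g, ?_, ?_⟩
  · rw [Set.support_indicator, Set.inter_eq_left.mpr hS, hScard]
    exact min_le_left _ _
  · rw [Set.support_indicator, ← Set.sdiff_eq_compl_inter, Set.ncard_sdiff hS, hScard]
    omega

namespace ValidEncoder

variable {𝓕 𝓚 F : Type} [Fintype 𝓕] [Field F] [Fintype F] {X : 𝓚 → Finset 𝓕} {ε l : ℕ}
  {H : Matrix (Fin l) 𝓕 F}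

theorem eqOn_of_mulVec_eq (hH : ValidEncoder F X ε H) (k : 𝓚) {w₁ w₂ e₁ e₂ : 𝓕 → F}
    (he₁ : (support e₁).ncard ≤ ε) (he₂ : (support e₂).ncard ≤ ε)
    (hw : ∀ f ∈ X k, w₁ f = w₂ f) (hmul : H *ᵥ (w₁ + e₁) = H *ᵥ (w₂ + e₂)) :
    ∀ f ∈ X k, e₁ f = e₂ f := by
  obtain ⟨D, hD⟩ := hH k
  have hdec := hD w₁ e₁ he₁
  rw [hmul, show (fun f : X k => w₁ f.1) = fun f => w₂ f.1 from funext fun f => hw f.1 f.2,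
    hD w₂ e₂ he₂] at hdec
  intro f hf
  simpa [hw f hf] using (congrFun hdec ⟨f, hf⟩).symm

theorem eq_zero_on_of_mulVec_eq_zero (hH : ValidEncoder F X ε H) (k : 𝓚) {d : 𝓕 → F}
    (hd : H *ᵥ d = 0) {T : Finset 𝓕} (hT : #T ≤ 2 * ε) (hdT : ∀ f ∈ X k, d f ≠ 0 → f ∈ T) :
    ∀ f ∈ X k, d f = 0 := by
  classical
  -- Split `d` on `X k` into two updates of weight `≤ ε`; the received words `0 + e₁` and
  -- `(g - d) + (-e₂)` have the same syndrome and agree on `X k`, so the decoder forces `e₁ = -e₂`.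
  set g := Set.indicator (↑(X k)) d
  have hg : (support g).ncard ≤ ε + ε := by
    refine (Set.ncard_le_ncard ?_ T.finite_toSet).trans (by rw [Set.ncard_coe_finset]; omega)
    rw [Set.support_indicator]
    exact fun f ⟨hfX, hfd⟩ => hdT f hfX hfd
  obtain ⟨e₁, e₂, hsum, he₁, he₂⟩ := exists_add_eq_of_ncard_support_le hg
  have hcancel := hH.eqOn_of_mulVec_eq k (w₁ := 0) (w₂ := g - d) (e₂ := -e₂) he₁
    (by rwa [support_neg]) (fun f hf => by simp [g, hf]) (by
      rw [← hsum, show e₁ + e₂ - d + -e₂ = e₁ - d by abel, mulVec_sub, hd, sub_zero, zero_add])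
  intro f hf
  have hgf : g f = d f := Set.indicator_of_mem (Finset.mem_coe.mpr hf) d
  rw [← hgf, ← hsum, Pi.add_apply, hcancel f hf, Pi.neg_apply, neg_add_cancel]

theorem linearIndepOn_union (hH : ValidEncoder F X ε H) (k : 𝓚) {s : Set 𝓕} {T : Finset 𝓕}
    (hs : LinearIndepOn F H.col s) (hsX : ∀ f ∈ s, f ∉ X k) (hTX : T ⊆ X k) (hT : #T ≤ 2 * ε) :
    LinearIndepOn F H.col (s ∪ ↑T) := by
  rw [Matrix.linearIndepOn_col_iff] at hs ⊢
  intro d hds hd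
  have hdX := hH.eq_zero_on_of_mulVec_eq_zero k hd hT fun f hfX hf => by
    by_contra hfT
    exact hf (hds f (by rintro (hfs | hfT'); exacts [hsX f hfs hfX, hfT hfT']))
  refine hs d (fun f hfs => ?_) hd
  by_cases hfT : f ∈ T
  · exact hdX f (hTX hfT)
  · exact hds f (by simp [hfs, hfT])

end ValidEncoder

theorem exists_validEncoder {𝓕 𝓚 : Type} [Fintype 𝓕] (F : Type) [Field F] [Fintype F]
    (X : 𝓚 → Finset 𝓕) (ε : ℕ) :
    ∃ H : Matrix (Fin (Fintype.card 𝓕)) 𝓕 F, ValidEncoder F X ε H := by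
  classical
  refine ⟨(1 : Matrix 𝓕 𝓕 F).submatrix (Fintype.equivFin 𝓕).symm id, fun k => ?_⟩
  refine ⟨fun c _ f => c (Fintype.equivFin 𝓕 f), fun w e _ => funext fun f => ?_⟩
  simp [mulVec, dotProduct, one_apply]

theorem le_optLen {𝓕 𝓚 : Type} [Fintype 𝓕] {X : 𝓚 → Finset 𝓕} {ε m : ℕ}
    (h : ∀ (F : Type) [Field F] [Fintype F] (l : ℕ) (H : Matrix (Fin l) 𝓕 F),
      ValidEncoder F X ε H → m ≤ l) :
    m ≤ optLen X ε := by
  obtain ⟨H, hH⟩ := exists_validEncoder (ZMod 2) X ε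
  refine le_csInf ⟨_, ZMod 2, inferInstance, inferInstance, H, hH⟩ ?_
  rintro l ⟨F, _, _, H, hH⟩
  exact h F l H hH

def constructionIPlacement (α : Type) [Fintype α] [DecidableEq α] (a b : ℕ) :
    {k : Finset α // #k = b} → Finset {f : Finset α // #f = a} :=
  fun k => univ.filter fun f => (f.1 ∩ k.1).Nonempty

section ConstructionI

variable {α : Type} [Fintype α] [DecidableEq α] {a b : ℕ}

theorem mem_constructionIPlacement {k : {k : Finset α // #k = b}}
    {f : {f : Finset α // #f = a}} :
    f ∈ constructionIPlacement α a b k ↔ (f.1 ∩ k.1).Nonempty := by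
  simp [constructionIPlacement]

theorem card_filter_coe_subset (a : ℕ) (A : Finset α) :
    #{f : {f : Finset α // #f = a} | f.1 ⊆ A} = (#A).choose a := by
  rw [← card_powersetCard, ← card_map (Embedding.subtype _)]
  congr 1
  ext t
  simp [mem_powersetCard, and_comm]

theorem card_filter_coe_subset_and_mem (ha : 0 < a) {A : Finset α} {i : α} (hi : i ∈ A) :
    #{f : {f : Finset α // #f = a} | f.1 ⊆ A ∧ i ∈ f.1} = (#A - 1).choose (a - 1) := by
  have hcount := card_filter_powersetCard_subset {i} A a (by simpa using hi)
    (by rw [card_singleton]; omega)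
  rw [card_singleton] at hcount
  rw [← hcount, ← card_map (Embedding.subtype _)]
  congr 1
  ext t
  simp only [mem_map, mem_filter, mem_univ, true_and, Embedding.subtype_apply, Subtype.exists,
    exists_and_left, exists_prop, exists_eq_right_right, singleton_subset_iff, mem_powersetCard]
  tauto

namespace ValidEncoder

variable {F : Type} [Field F] [Fintype F] {ε l : ℕ}
  {H : Matrix (Fin l) {f : Finset α // #f = a} F}

theorem linearIndepOn_setOf_subset (hH : ValidEncoder F (constructionIPlacement α a b) ε H)
    (ha : 0 < a) {A B : Finset α} (hAB : Disjoint A B) (hB : #B + 1 = b)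
    (hA : ∀ j < #A, j.choose (a - 1) < 2 * ε) :
    LinearIndepOn F H.col {f : {f : Finset α // #f = a} | f.1 ⊆ A} := by
  rw [Matrix.linearIndepOn_col_iff]
  intro d hds hd
  have hdA : ∀ f, d f ≠ 0 → f.1 ⊆ A := fun f hf => by
    by_contra hfA
    exact hf (hds f (by simpa using hfA))
  ext f₀
  by_contra hf₀
  obtain ⟨i, hi⟩ : f₀.1.Nonempty := card_pos.mp (by simpa [f₀.2] using ha)
  have hiA : i ∈ A := hdA f₀ hf₀ hi
  have hiB : i ∉ B := disjoint_left.mp hAB hiA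
  let k : {k : Finset α // #k = b} := ⟨insert i B, by rw [card_insert_of_notMem hiB, hB]⟩
  have hT : #{f : {f : Finset α // #f = a} | f.1 ⊆ A ∧ i ∈ f.1} ≤ 2 * ε := by
    rw [card_filter_coe_subset_and_mem ha hiA]
    exact (hA _ (Nat.sub_lt (card_pos.mpr ⟨i, hiA⟩) one_pos)).le
  refine hf₀ (hH.eq_zero_on_of_mulVec_eq_zero k hd hT (fun f hfX hf => ?_) f₀
    (mem_constructionIPlacement.mpr ⟨i, mem_inter.mpr ⟨hi, mem_insert_self i B⟩⟩))
  obtain ⟨j, hj⟩ := mem_constructionIPlacement.mp hfX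
  rw [mem_inter, mem_insert] at hj
  obtain ⟨hjf, rfl | hjB⟩ := hj
  · simpa using ⟨hdA f hf, hjf⟩
  · exact absurd hjB (disjoint_left.mp hAB (hdA f hf hjf))

theorem exists_linearIndepOn_card (hH : ValidEncoder F (constructionIPlacement α a b) ε H)
    (ha : 0 < a) {a₀ : ℕ} (ha₀ : 2 * ε ≤ a₀.choose (a - 1))
    (ha₀min : ∀ j < a₀, j.choose (a - 1) < 2 * ε) {B : Finset α} (hB : #B + 1 = b) (m : ℕ)
    {A : Finset α} (hAB : Disjoint A B) (hA : #A = a₀ + m) :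
    ∃ s : Finset {f : Finset α // #f = a}, (∀ f ∈ s, f.1 ⊆ A) ∧
      #s = a₀.choose a + 2 * ε * m ∧ LinearIndepOn F H.col ↑s := by
  induction m generalizing A with
  | zero =>
    refine ⟨univ.filter fun f : {f : Finset α // #f = a} => f.1 ⊆ A,
      fun f hf => (mem_filter.mp hf).2, ?_, ?_⟩
    · simp [card_filter_coe_subset, hA]
    · simpa using hH.linearIndepOn_setOf_subset ha hAB hB (by rwa [hA])
  | succ m ih =>
    obtain ⟨x, hx⟩ : A.Nonempty := card_pos.mp (by omega)
    obtain ⟨s, hsA, hs_card, hs⟩ := ih (A := A.erase x)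
      (disjoint_of_subset_left (erase_subset x A) hAB) (by rw [card_erase_of_mem hx, hA]; omega)
    have hxB : x ∉ B := disjoint_left.mp hAB hx
    let k : {k : Finset α // #k = b} := ⟨insert x B, by rw [card_insert_of_notMem hxB, hB]⟩
    have hstar : 2 * ε ≤ #{f : {f : Finset α // #f = a} | f.1 ⊆ A ∧ x ∈ f.1} := by
      rw [card_filter_coe_subset_and_mem ha hx, hA]
      exact ha₀.trans (Nat.choose_le_choose _ (by omega))
    obtain ⟨T, hTstar, hT⟩ := exists_subset_card_eq hstar
    have hTA : ∀ f ∈ T, f.1 ⊆ A ∧ x ∈ f.1 := fun f hf => by simpa using hTstar hf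
    have hsX : ∀ f ∈ s, f ∉ constructionIPlacement α a b k := by
      intro f hf hfX
      obtain ⟨j, hj⟩ := mem_constructionIPlacement.mp hfX
      rw [mem_inter, mem_insert] at hj
      obtain ⟨hjf, rfl | hjB⟩ := hj
      · exact (notMem_erase j A) (hsA f hf hjf)
      · exact disjoint_left.mp hAB (erase_subset x A (hsA f hf hjf)) hjB
    have hTX : T ⊆ constructionIPlacement α a b k := fun f hf =>
      mem_constructionIPlacement.mpr ⟨x, mem_inter.mpr ⟨(hTA f hf).2, mem_insert_self x B⟩⟩
    have hsT : Disjoint s T := disjoint_left.mpr fun f hfs hfT =>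
      notMem_erase x A (hsA f hfs (hTA f hfT).2)
    refine ⟨s ∪ T, fun f hf => ?_, ?_, ?_⟩
    · rcases mem_union.mp hf with hfs | hfT
      exacts [(hsA f hfs).trans (erase_subset x A), (hTA f hfT).1]
    · rw [card_union_of_disjoint hsT, hs_card, hT]; ring
    · simpa using hH.linearIndepOn_union k hs hsX hTX hT.le

end ValidEncoder

end ConstructionI

theorem shangguan_lower_bound_a0_general (n a b : ℕ) (ha : 0 < a) (hb : 0 < b) (hab : a + b ≤ n)
    (ε : ℕ)
    (a₀ : ℕ) (ha₀ : 2 * ε ≤ Nat.choose a₀ (a - 1))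
    (ha₀min : ∀ j : ℕ, j < a₀ → Nat.choose j (a - 1) < 2 * ε)
    (ha₀nb : a₀ ≤ n - b) :
    2 * ε * (n - b - a₀ + 1) + Nat.choose a₀ a ≤
      optLen (fun k : {s : Finset (Fin n) // s.card = b} =>
        Finset.univ.filter (fun f : {s : Finset (Fin n) // s.card = a} =>
          (f.1 ∩ k.1).Nonempty)) ε := by
  refine le_optLen fun F _ _ l H hH => ?_
  obtain ⟨B, -, hB⟩ := exists_subset_card_eq (s := (univ : Finset (Fin n))) (n := b - 1)
    (by rw [card_univ, Fintype.card_fin]; omega)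
  obtain ⟨s, -, hs_card, hs⟩ := ValidEncoder.exists_linearIndepOn_card (B := B) (A := Bᶜ) hH ha
    ha₀ ha₀min (by omega) (n - b - a₀ + 1) disjoint_compl_left
    (by rw [card_compl, Fintype.card_fin]; omega)
  calc 2 * ε * (n - b - a₀ + 1) + Nat.choose a₀ a = #s := by rw [hs_card]; ring
    _ ≤ l := card_le_of_linearIndepOn_col hs

/-- For the Shangguan et al. Construction-I placement with parameters
`n, a, b`, assume `ε ≥ 1` and `Z = C(n,a) − C(n−b,a) ≥ 2ε + 1`, and let `a₀` be the
smallest integer with `C(a₀, a−1) ≥ 2ε`. If `a₀ ≤ n − b`, then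
`ℓ*(X, ε) ≥ 2ε(n − b − a₀ + 1) + C(a₀, a)`. -/
theorem shangguan_lower_bound_a0 (n a b : ℕ) (ha : 0 < a) (hb : 0 < b) (hab : a + b ≤ n)
    (ε : ℕ) (hε : 1 ≤ ε)
    (hZ : 2 * ε + 1 ≤ Nat.choose n a - Nat.choose (n - b) a)
    (a₀ : ℕ) (ha₀ : 2 * ε ≤ Nat.choose a₀ (a - 1))
    (ha₀min : ∀ j : ℕ, j < a₀ → Nat.choose j (a - 1) < 2 * ε)
    (ha₀nb : a₀ ≤ n - b) :
    2 * ε * (n - b - a₀ + 1) + Nat.choose a₀ a ≤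
      optLen (fun k : {s : Finset (Fin n) // s.card = b} =>
        Finset.univ.filter (fun f : {s : Finset (Fin n) // s.card = a} =>
          (f.1 ∩ k.1).Nonempty)) ε :=
  shangguan_lower_bound_a0_general n a b ha hb hab ε a₀ ha₀ ha₀min ha₀nb
end

section
/- Consider the placement with subfile index set 𝓕 = {1,…,n}, node index set 𝓚 equal to the b-element subsets of {1,…,n}, and X_k = k for each node k (a subfile f is cached at node k if and only if f ∈ k), where 1 ≤ b ≤ n − 1. If ε ≥ 1 and b ≥ 2ε + 1, then the optimal codelength is exactly ℓ*(X,ε) = 2ε + n − b. -/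
open Matrix Finset

/-!
Write `d = 2ε + (n - b)`. For any placement, `H` is a valid encoder iff every kernel vector of
`H` with at most `2ε` nonzero entries in some `X_k` vanishes on `X_k`: a decoder exists iff
`(H(w+e), w|_{X_k})` determines `(w+e)|_{X_k}`, and the differences `e - e'` of updates of
weight `≤ ε` are exactly the vectors of weight `≤ 2ε`. For the `b`-subsets placement this
amounts to every nonzero kernel vector having weight `> d`: a kernel vector with at most `2ε`
nonzero entries on `X_k` has at most `2ε + |X_kᶜ| = d` in total, and a nonzero kernel vector of
weight `≤ d` would have to vanish on a `b`-set meeting its support in between `1` and `2ε`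
points. Any `d` columns of such an `H` are independent, so it has at least `d` rows, and a
Vandermonde matrix `(x_j ^ i)_{i < d}` with distinct `x_j` in a prime field of size `≥ n` has
exactly `d`.
-/

open Function

section HammingWeight

variable {ι F : Type*} [Fintype ι]

theorem ncard_setOf_ne_zero_eq_hammingNorm [Zero F] [DecidableEq F] (z : ι → F) :
    {i | z i ≠ 0}.ncard = hammingNorm z := by
  rw [hammingNorm, ← Set.ncard_coe_finset, coe_filter]
  simp

theorem hammingNorm_le_card_of_support_subset [Zero F] [DecidableEq F] {z : ι → F}
    {s : Finset ι} (h : ∀ i, z i ≠ 0 → i ∈ s) : hammingNorm z ≤ #s :=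
  card_le_card fun i hi => h i (mem_filter.mp hi).2

/-- Any `d` columns of `H` are linearly independent. -/
def Matrix.KerWeightGT {m : Type*} [Field F] [DecidableEq F] (H : Matrix m ι F) (d : ℕ) :
    Prop :=
  ∀ z : ι → F, H *ᵥ z = 0 → hammingNorm z ≤ d → z = 0

variable [Field F] [DecidableEq F]

theorem Matrix.KerWeightGT.le_height {l d : ℕ} {H : Matrix (Fin l) ι F}
    (hH : H.KerWeightGT d) (hd : d ≤ Fintype.card ι) : d ≤ l := by
  obtain ⟨e⟩ : Nonempty (Fin d ↪ ι) := Embedding.nonempty_of_card_le (by simpa using hd)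
  have hinj : Injective (H.mulVecLin ∘ₗ ExtendByZero.linearMap F e) := by
    rw [← LinearMap.ker_eq_bot, LinearMap.ker_eq_bot']
    intro v hv
    have hweight : hammingNorm (extend e v 0) ≤ d := by
      refine (hammingNorm_le_card_of_support_subset (s := univ.map e) fun i hi => ?_).trans
        (by simp)
      by_contra hi'
      exact hi (extend_apply' _ _ _ fun ⟨a, ha⟩ => hi' (ha ▸ mem_map_of_mem e (mem_univ a)))
    have hzero := hH _ hv hweight
    funext a
    simpa [e.injective.extend_apply] using congrFun hzero (e a)
  simpa using LinearMap.finrank_le_finrank_of_injective hinj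

theorem Matrix.kerWeightGT_of_injective {x : ι → F} (hx : Injective x) (l : ℕ) :
    (Matrix.of fun (i : Fin l) j => x j ^ (i : ℕ)).KerWeightGT l := by
  intro z hz hzl
  set S : Finset ι := {i | z i ≠ 0}
  let σ : Fin #S ≃ S := S.equivFin.symm
  have hsum : ∀ i : Fin #S, ∑ j, z (σ j) * x (σ j) ^ (i : ℕ) = 0 := fun i => by
    have hi : (i : ℕ) < l := i.2.trans_le hzl
    calc ∑ j, z (σ j) * x (σ j) ^ (i : ℕ)
        = ∑ j ∈ S, z j * x j ^ (i : ℕ) := by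
          rw [σ.sum_comp fun j : S => z j * x j ^ (i : ℕ)]
          exact sum_coe_sort S fun j => z j * x j ^ (i : ℕ)
      _ = ∑ j, x j ^ (i : ℕ) * z j := by
          rw [sum_filter_of_ne fun j _ hj => left_ne_zero_of_mul hj]
          simp only [mul_comm]
      _ = 0 := congrFun hz ⟨i, hi⟩
  have hzS := Matrix.eq_zero_of_forall_pow_sum_mul_pow_eq_zero (f := fun j => x (σ j))
    (v := fun j => z (σ j)) (hx.comp (Subtype.val_injective.comp σ.injective)) hsum
  funext j
  by_contra hj
  exact hj (by simpa [σ] using congrFun hzS (σ.symm ⟨j, by simpa [S] using hj⟩))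

end HammingWeight

section CacheUpdate

variable {ι κ F : Type} [Fintype ι] [Field F] [Fintype F] [DecidableEq F]

theorem validEncoder_iff {l ε : ℕ} {X : κ → Finset ι} {H : Matrix (Fin l) ι F} :
    ValidEncoder F X ε H ↔ ∀ k (w e w' e' : ι → F), hammingNorm e ≤ ε → hammingNorm e' ≤ ε →
      H *ᵥ (w + e) = H *ᵥ (w' + e') → (∀ i ∈ X k, w i = w' i) →
        ∀ i ∈ X k, (w + e) i = (w' + e') i := by
  simp only [ValidEncoder, ncard_setOf_ne_zero_eq_hammingNorm]
  refine forall_congr' fun k => ⟨?_, fun h => ?_⟩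
  · rintro ⟨D, hD⟩ w e w' e' he he' hH hw i hi
    have hw' : (fun i : X k => w i) = fun i : X k => w' i := funext fun i => hw i i.2
    have hDw := hD w e he
    rw [hH, hw', hD w' e' he'] at hDw
    exact (congrFun hDw ⟨i, hi⟩).symm
  · let P := {p : (ι → F) × (ι → F) // hammingNorm p.2 ≤ ε}
    let g : P → (Fin l → F) × (X k → F) := fun p => (H *ᵥ (p.1.1 + p.1.2), fun i => p.1.1 i)
    let r : P → X k → F := fun p i => (p.1.1 + p.1.2) i
    have hr : r.FactorsThrough g := fun p q hpq => funext fun i =>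
      h _ _ _ _ p.2 q.2 (congrArg Prod.fst hpq)
        (fun j hj => congrFun (congrArg Prod.snd hpq) ⟨j, hj⟩) i i.2
    exact ⟨fun y v => extend g r 0 (y, v), fun w e he => hr.extend_apply 0 ⟨(w, e), he⟩⟩

variable [DecidableEq ι]

theorem validEncoder_iff_ker {l ε : ℕ} {X : κ → Finset ι} {H : Matrix (Fin l) ι F} :
    ValidEncoder F X ε H ↔ ∀ k (z : ι → F), H *ᵥ z = 0 → #{i ∈ X k | z i ≠ 0} ≤ 2 * ε →
      ∀ i ∈ X k, z i = 0 := by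
  rw [validEncoder_iff]
  refine forall_congr' fun k => ⟨fun h z hz hzk => ?_, fun h w e w' e' he he' hH hw => ?_⟩
  · -- write `z` on `X k` as the difference of two updates of weight at most `ε`
    set A : Finset ι := {i ∈ X k | z i ≠ 0}
    obtain ⟨A₁, hA₁A, hA₁⟩ := exists_subset_card_eq (min_le_left #A ε)
    let e : ι → F := (A₁ : Set ι).indicator z
    let e' : ι → F := (↑(A \ A₁) : Set ι).indicator (-z)
    have hwt (s : Finset ι) (y : ι → F) : hammingNorm ((s : Set ι).indicator y) ≤ #s :=
      hammingNorm_le_card_of_support_subset fun i hi => Set.mem_of_indicator_ne_zero hi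
    have he : hammingNorm e ≤ ε := (hwt A₁ z).trans (hA₁ ▸ min_le_right _ _)
    have he' : hammingNorm e' ≤ ε := by
      refine (hwt _ _).trans ?_
      rw [card_sdiff_of_subset hA₁A, hA₁]
      omega
    have hagree : ∀ i ∈ X k, (z - e) i = (-e') i := fun i hi => by
      by_cases hiA₁ : i ∈ A₁
      · simp [e, e', hiA₁]
      by_cases hzi : z i = 0
      · simp [e, e', hiA₁, hzi]
      · simp [e, e', hiA₁, A, hi, hzi]
    simpa [H.mulVec_zero, hz] using h (z - e) e (-e') e' he he' (by simp [hz]) hagree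
  · set z := w + e - (w' + e')
    have hz : H *ᵥ z = 0 := by rw [mulVec_sub, hH, sub_self]
    have hzk : #{i ∈ X k | z i ≠ 0} ≤ 2 * ε := by
      refine (card_le_card fun i hi => ?_).trans
        ((card_union_le {i | e i ≠ 0} {i | e' i ≠ 0}).trans
          (by unfold hammingNorm at he he'; omega))
      obtain ⟨hik, hzi⟩ := mem_filter.mp hi
      simp only [z, Pi.sub_apply, Pi.add_apply, hw i hik, add_sub_add_left_eq_sub] at hzi
      by_contra hi'
      simp_all [mem_union, mem_filter]
    exact fun i hi => sub_eq_zero.mp (h z hz hzk i hi)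

end CacheUpdate

theorem Finset.exists_card_eq_card_inter_eq {α : Type*} [Fintype α] [DecidableEq α]
    {S : Finset α} {b m : ℕ} (hmS : m ≤ #S) (hmb : m ≤ b) (hb : b ≤ m + #Sᶜ) :
    ∃ k : Finset α, #k = b ∧ #(k ∩ S) = m := by
  obtain ⟨A, hAS, hA⟩ := exists_subset_card_eq hmS
  have hAS' : Disjoint A Sᶜ := disjoint_compl_right.mono_left hAS
  obtain ⟨k, hAk, hkA, hk⟩ := exists_subsuperset_card_eq (subset_union_left (s₂ := Sᶜ))
    (hA.trans_le hmb) (by rwa [card_union_of_disjoint hAS', hA])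
  refine ⟨k, hk, ?_⟩
  suffices k ∩ S = A by rw [this, hA]
  refine Subset.antisymm (fun i hi => ?_) (subset_inter hAk hAS)
  rcases mem_union.mp (hkA (mem_inter.mp hi).1) with hiA | hiS
  · exact hiA
  · exact absurd (mem_inter.mp hi).2 (mem_compl.mp hiS)

theorem validEncoder_subsets_iff {ι F : Type} [Fintype ι] [DecidableEq ι] [Field F] [Fintype F]
    [DecidableEq F] {l b ε : ℕ} {H : Matrix (Fin l) ι F} (hε : 1 ≤ ε) (hεb : 2 * ε ≤ b)
    (hb : b ≤ Fintype.card ι) :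
    ValidEncoder F (fun k : {s : Finset ι // #s = b} => k.1) ε H ↔
      H.KerWeightGT (2 * ε + (Fintype.card ι - b)) := by
  rw [validEncoder_iff_ker]
  constructor
  · intro h z hz hzw
    by_contra hz0
    set S : Finset ι := {i | z i ≠ 0}
    have hS : 1 ≤ #S := hammingNorm_pos_iff.mpr hz0
    have hSc : #Sᶜ = Fintype.card ι - #S := card_compl S
    have hSw : #S ≤ 2 * ε + (Fintype.card ι - b) := hzw
    obtain ⟨k, hk, hkS⟩ := exists_card_eq_card_inter_eq (S := S) (b := b)
      (min_le_left #S (2 * ε)) (by omega) (by omega)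
    have hkz : {i ∈ k | z i ≠ 0} = k ∩ S := by ext; simp [S]
    have hvanish := h ⟨k, hk⟩ z hz (by rw [hkz, hkS]; exact min_le_right _ _)
    obtain ⟨i, hi⟩ : (k ∩ S).Nonempty := card_pos.mp (by omega)
    exact (mem_filter.mp (mem_inter.mp hi).2).2 (hvanish i (mem_inter.mp hi).1)
  · intro hH k z hz hzk i hi
    have hzw : hammingNorm z ≤ 2 * ε + (Fintype.card ι - b) := by
      refine (hammingNorm_le_card_of_support_subset (s := {i ∈ k.1 | z i ≠ 0} ∪ k.1ᶜ)
        fun i hi => ?_).trans ((card_union_le _ _).trans ?_)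
      · by_cases hik : i ∈ k.1 <;> simp [hik, hi]
      · rw [card_compl, k.2]
        omega
    rw [hH z hz hzw, Pi.zero_apply]

theorem shangguan_a_eq_one_optLen_general (n b : ℕ) (hbn : b ≤ n - 1)
    (ε : ℕ) (hε : 1 ≤ ε) (hbe : 2 * ε + 1 ≤ b) :
    optLen (fun k : {s : Finset (Fin n) // s.card = b} => (k.1 : Finset (Fin n))) ε =
      2 * ε + (n - b) := by
  classical
  have hεb : 2 * ε ≤ b := by omega
  have hb : b ≤ Fintype.card (Fin n) := by simp only [Fintype.card_fin]; omega
  refine IsLeast.csInf_eq ⟨?_, ?_⟩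
  · obtain ⟨p, hnp, hp⟩ := Nat.exists_infinite_primes n
    have : Fact p.Prime := ⟨hp⟩
    obtain ⟨x⟩ : Nonempty (Fin n ↪ ZMod p) := Embedding.nonempty_of_card_le (by simpa using hnp)
    refine ⟨ZMod p, inferInstance, inferInstance, .of fun i j => x j ^ (i : ℕ),
      (validEncoder_subsets_iff hε hεb hb).mpr ?_⟩
    simpa using kerWeightGT_of_injective x.injective (2 * ε + (n - b))
  · rintro l ⟨F, _, _, H, hH⟩
    simpa using ((validEncoder_subsets_iff hε hεb hb).mp hH).le_height (by simp; omega)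

/-- For the placement with subfiles `{1,…,n}`, nodes the `b`-subsets of
`{1,…,n}`, and `X k = k` (the case `a = 1` of Shangguan et al. Construction-I, `Z = b`),
if `ε ≥ 1`, `1 ≤ b ≤ n − 1` and `b ≥ 2ε + 1`, then `ℓ*(X, ε) = 2ε + n − b`. -/
theorem shangguan_a_eq_one_optLen (n b : ℕ) (hb1 : 1 ≤ b) (hbn : b ≤ n - 1)
    (ε : ℕ) (hε : 1 ≤ ε) (hbe : 2 * ε + 1 ≤ b) :
    optLen (fun k : {s : Finset (Fin n) // s.card = b} => (k.1 : Finset (Fin n))) ε =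
      2 * ε + (n - b) :=
  shangguan_a_eq_one_optLen_general n b hbn ε hε hbe
end
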